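/- arXiv:1901.09075 — 9 statements merged into one kernel-verified Lean document; each statement's English description precedes it below -/
import Mathlib

section
/- Let C be a convex set of vertices of a connected bipartite graph G, and let ab be an edge with a ∈ C and b ∉ C. Then every vertex of C is strictly closer to a than to b, i.e., C ⊆ W_ab where W_ab = {x : d(a,x) < d(b,x)}. -/
open SimpleGraph

universe u

variable {V : Type u}

/-- The geodesic interval between two vertices: the set of vertices lying on
shortest paths between them. -/
def gInterval (G : SimpleGraph V) (x y : V) : Set V :=
  {z | G.dist x z + G.dist z y = G.dist x y}

/-- A set of vertices is (geodesically) convex. -/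
def GConvex (G : SimpleGraph V) (C : Set V) : Prop :=
  ∀ x ∈ C, ∀ y ∈ C, gInterval G x y ⊆ C

/-- `Wside G a b` is the set `W_ab` of vertices strictly closer to `a` than to `b`. -/
def Wside (G : SimpleGraph V) (a b : V) : Set V :=
  {x | G.dist a x < G.dist b x}

/-- `Uside G a b` is the set `U_ab` of vertices of `W_ab` having a neighbour in `W_ba`. -/
def Uside (G : SimpleGraph V) (a b : V) : Set V :=
  {x | x ∈ Wside G a b ∧ ∃ y, G.Adj x y ∧ y ∈ Wside G b a}

/-- A graph is bipartite if it admits a proper 2-colouring. -/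
def IsBipartiteGraph (G : SimpleGraph V) : Prop :=
  ∃ c : V → Bool, ∀ u v, G.Adj u v → c u ≠ c v

/-- A partial cube: a connected bipartite graph all of whose half-spaces `W_ab`, `W_ba`
are convex (Djoković's characterization). -/
def IsPartialCube (G : SimpleGraph V) : Prop :=
  G.Connected ∧ IsBipartiteGraph G ∧
    ∀ a b, G.Adj a b → GConvex G (Wside G a b) ∧ GConvex G (Wside G b a)

/-- The Djoković–Winkler relation Θ between (unordered) edges. -/
def ThetaRel (G : SimpleGraph V) (e f : Sym2 V) : Prop :=
  ∃ x y u v : V, e = s(x, y) ∧ f = s(u, v) ∧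
    G.dist x u + G.dist y v ≠ G.dist x v + G.dist y u

/-- The geodesic convex hull of a set of vertices. -/
def gConvexHull (G : SimpleGraph V) (A : Set V) : Set V :=
  ⋂₀ {C : Set V | GConvex G C ∧ A ⊆ C}

/- In a bipartite graph the distances from the two ends of an edge to any vertex have opposite
parities, so `x ∉ W_ab` means `d(b,x) < d(a,x)`, i.e. `d(a,x) = 1 + d(b,x)`: then `b` lies on a
shortest `a`–`x` path, and convexity of `C ∋ a, x` would force `b ∈ C`. -/

namespace SimpleGraph

variable {G : SimpleGraph V} {a b u v : V}

theorem Coloring.even_dist_iff_congr (c : G.Coloring Bool) (h : G.Reachable u v) :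
    Even (G.dist u v) ↔ (c u ↔ c v) := by
  obtain ⟨p, hp⟩ := h.exists_walk_length_eq_dist
  rw [← hp]
  exact c.even_length_iff_congr p

theorem Adj.dist_ne_dist_of_isBipartiteGraph (hconn : G.Connected) (hbip : IsBipartiteGraph G)
    (hab : G.Adj a b) (x : V) : G.dist a x ≠ G.dist b x := by
  obtain ⟨color, hcolor⟩ := hbip
  let c : G.Coloring Bool := Coloring.mk color (hcolor _ _)
  intro hdist
  have hax := c.even_dist_iff_congr (hconn a x)
  have hbx := c.even_dist_iff_congr (hconn b x)
  rw [hdist, hbx] at hax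
  exact c.valid hab (Bool.eq_iff_iff.mpr (by tauto))

theorem Adj.mem_gInterval_of_dist_lt (hab : G.Adj a b) {x : V} (hlt : G.dist b x < G.dist a x) :
    b ∈ gInterval G a x := by
  have htri : G.dist a x ≤ G.dist a b + G.dist b x := hab.reachable.dist_triangle_left x
  have hab1 : G.dist a b = 1 := dist_eq_one_iff_adj.mpr hab
  show G.dist a b + G.dist b x = G.dist a x
  omega

end SimpleGraph

/-- Every convex set of a connected bipartite graph lies on the `a`-side of any
edge `ab` of its edge-boundary with `a` in the set. -/
theorem stmt_0 (G : SimpleGraph V) (hconn : G.Connected)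
    (hbip : IsBipartiteGraph G)
    (C : Set V) (hC : GConvex G C) (a b : V) (hab : G.Adj a b)
    (haC : a ∈ C) (hbC : b ∉ C) :
    C ⊆ Wside G a b := by
  intro x hx
  by_contra hxW
  have hlt : G.dist b x < G.dist a x :=
    (not_lt.mp hxW).lt_of_ne' (hab.dist_ne_dist_of_isBipartiteGraph hconn hbip x)
  exact hbC (hC a haC x hx (hab.mem_gInterval_of_dist_lt hlt))
end

section
/- Every geodesic interval of a partial cube is a convex set of vertices. -/
open SimpleGraph

universe u

variable {V : Type u}

/-!
If `t ∉ I(x, y)`, walk from `t` towards `x` along a geodesic. The walk starts off the interval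
and ends on it, so at some step it passes from a vertex `b` with `d(x,b) + d(b,y) > d(x,y)` to a
neighbour `a` on the interval. Bipartiteness forces `a` to be closer than `b` to both `x` and `y`,
while `b` is closer than `a` to `t`. So `x, y ∈ W_ab` and `t ∈ W_ba`. As `W_ab` is convex, it
contains `I(x, y)`, hence every interval between two of its points, contradicting `t ∈ W_ba`.
-/

section

variable {G : SimpleGraph V}

lemma IsBipartiteGraph.dist_ne_of_adj (hbip : IsBipartiteGraph G) (hconn : G.Connected) (u : V)
    {v w : V} (hadj : G.Adj v w) : G.dist u v ≠ G.dist u w := by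
  obtain ⟨c, hc⟩ := hbip
  let col : G.Coloring Bool := Coloring.mk c fun h => hc _ _ h
  obtain ⟨p, hp⟩ := hconn.exists_walk_length_eq_dist u v
  obtain ⟨q, hq⟩ := hconn.exists_walk_length_eq_dist u w
  intro hvw
  have hpq : (col u ↔ col v) ↔ (col u ↔ col w) := by
    rw [← col.even_length_iff_congr p, ← col.even_length_iff_congr q, hp, hq, hvw]
  simp only [col, Coloring.mk, RelHom.coeFn_mk] at hpq
  apply hc v w hadj
  revert hpq
  cases c u <;> cases c v <;> cases c w <;> decide

lemma IsBipartiteGraph.dist_eq_add_one_or (hbip : IsBipartiteGraph G) (hconn : G.Connected)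
    (u : V) {v w : V} (hadj : G.Adj v w) :
    G.dist u w = G.dist u v + 1 ∨ G.dist u v = G.dist u w + 1 := by
  have := hbip.dist_ne_of_adj hconn u hadj
  have := hadj.diff_dist_adj (u := u)
  omega

lemma SimpleGraph.Connected.exists_adj_dist_eq_of_dist_eq_succ (hconn : G.Connected) {u x : V} {n : ℕ}
    (h : G.dist u x = n + 1) : ∃ u', G.Adj u u' ∧ G.dist u' x = n := by
  obtain ⟨p, hp⟩ := hconn.exists_walk_length_eq_dist u x
  cases p with
  | nil => simp at h
  | @cons _ u' _ huu' q =>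
    refine ⟨u', huu', ?_⟩
    have := dist_le q
    have := hconn.dist_triangle (u := u) (v := u') (w := x)
    rw [Walk.length_cons, dist_eq_one_iff_adj.2 huu'] at *
    omega

lemma exists_adj_separating_of_lt_dist_add (hconn : G.Connected) (hbip : IsBipartiteGraph G)
    {x y t : V} (u : V) (hu : u ∈ gInterval G t x)
    (hviol : G.dist x y < G.dist x u + G.dist u y) :
    ∃ a b, G.Adj a b ∧ x ∈ Wside G a b ∧ y ∈ Wside G a b ∧ t ∈ Wside G b a := by
  obtain ⟨n, hn⟩ : ∃ n, G.dist u x = n := ⟨_, rfl⟩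
  induction n generalizing u with
  | zero =>
    obtain rfl : u = x := (hconn u x).dist_eq_zero_iff.1 hn
    simp at hviol
  | succ n ih =>
    obtain ⟨u', huu', hu'x⟩ := hconn.exists_adj_dist_eq_of_dist_eq_succ hn
    have hstep : G.dist u u' = 1 := dist_eq_one_iff_adj.2 huu'
    have htu' : G.dist t u' = G.dist t u + 1 := by
      have := hconn.dist_triangle (u := t) (v := u) (w := u')
      have := hconn.dist_triangle (u := t) (v := u') (w := x)
      have : G.dist t u + G.dist u x = G.dist t x := hu
      omega
    have hu' : u' ∈ gInterval G t x := by
      change G.dist t u' + G.dist u' x = G.dist t x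
      have : G.dist t u + G.dist u x = G.dist t x := hu
      omega
    have hxu : G.dist x u = n + 1 := dist_comm.trans hn
    have hxu' : G.dist x u' = n := dist_comm.trans hu'x
    by_cases hviol' : G.dist x y < G.dist x u' + G.dist u' y
    · exact ih u' hu' hviol' hu'x
    · have hyu : G.dist u y = G.dist u' y + 1 := by
        have := hbip.dist_eq_add_one_or hconn y huu'
        have : G.dist y u = G.dist u y := dist_comm
        have : G.dist y u' = G.dist u' y := dist_comm
        omega
      refine ⟨u', u, huu'.symm, ?_, ?_, ?_⟩
      · change G.dist u' x < G.dist u x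
        omega
      · change G.dist u' y < G.dist u y
        omega
      · change G.dist u t < G.dist u' t
        have : G.dist u t = G.dist t u := dist_comm
        have : G.dist u' t = G.dist t u' := dist_comm
        omega

lemma exists_adj_separating_of_notMem_gInterval (hconn : G.Connected)
    (hbip : IsBipartiteGraph G) {x y t : V} (ht : t ∉ gInterval G x y) :
    ∃ a b, G.Adj a b ∧ x ∈ Wside G a b ∧ y ∈ Wside G a b ∧ t ∈ Wside G b a :=
  exists_adj_separating_of_lt_dist_add hconn hbip t (by simp [gInterval])
    (hconn.dist_triangle.lt_of_ne (Ne.symm ht))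

end

/-- Every geodesic interval of a partial cube is convex. -/
theorem stmt_2 (G : SimpleGraph V) (hG : IsPartialCube G) (x y : V) :
    GConvex G (gInterval G x y) := by
  obtain ⟨hconn, hbip, hWconvex⟩ := hG
  intro z hz w hw t ht
  by_contra htxy
  obtain ⟨a, b, hab, hxW, hyW, htW⟩ := exists_adj_separating_of_notMem_gInterval hconn hbip htxy
  have hW : GConvex G (Wside G a b) := (hWconvex a b hab).1
  have htW' : t ∈ Wside G a b := hW z (hW x hxW y hyW hz) w (hW x hxW y hyW hw) ht
  exact lt_asymm (show G.dist b t < G.dist a t from htW) htW'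
end

section
/- Let G be a partial cube, x,y two vertices, P a shortest (x,y)-path and W any (x,y)-path of G. Then each edge of P is Θ-equivalent to some edge of W. -/
open SimpleGraph

universe u

variable {V : Type u}

/-! If `ab` is an edge of a geodesic from `x` to `y`, then `x` lies in the half-space `W_ab`
and `y` in `W_ba`, so any walk from `x` to `y` leaves `W_ab` along some edge `uv`. For such an
edge `d(a,u) < d(b,u)` and `d(b,v) ≤ d(a,v)`, hence `d(a,u) + d(b,v) < d(a,v) + d(b,u)`. -/

namespace SimpleGraph

variable {G : SimpleGraph V}

lemma dist_add_one_add_dist_le_of_mem_darts {x y : V} {P : G.Walk x y}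
    (hP : P.length = G.dist x y) {d : G.Dart} (hd : d ∈ P.darts) :
    G.dist x d.fst + 1 + G.dist d.snd y ≤ G.dist x y := by
  obtain ⟨ru, rv, rfl⟩ := (Walk.isSubwalk_toWalk_adj_iff_mem_darts P).mpr hd
  have hru := dist_le ru
  have hrv := dist_le rv
  simp only [Walk.length_append, Walk.length_cons, Walk.length_nil] at hP
  omega

lemma mem_wside_of_mem_darts (hG : G.Connected) {x y : V} {P : G.Walk x y}
    (hP : P.length = G.dist x y) {d : G.Dart} (hd : d ∈ P.darts) :
    x ∈ Wside G d.fst d.snd ∧ y ∈ Wside G d.snd d.fst := by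
  have hP' := dist_add_one_add_dist_le_of_mem_darts hP hd
  have hxb := hG.dist_triangle (u := x) (v := d.snd) (w := y)
  have hxa := hG.dist_triangle (u := x) (v := d.fst) (w := y)
  simp only [Wside, Set.mem_ofPred_eq, dist_comm (u := d.fst) (v := x),
    dist_comm (u := d.snd) (v := x)]
  omega

lemma notMem_wside_of_mem_wside {a b v : V} (hv : v ∈ Wside G b a) : v ∉ Wside G a b :=
  fun h => lt_asymm (α := ℕ) h hv

lemma thetaRel_of_mem_wside_of_notMem_wside {a b u v : V} (hu : u ∈ Wside G a b)
    (hv : v ∉ Wside G a b) : ThetaRel G s(a, b) s(u, v) := by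
  refine ⟨a, b, u, v, rfl, rfl, ?_⟩
  simp only [Wside, Set.mem_ofPred_eq, not_lt] at hu hv
  omega

end SimpleGraph

theorem stmt_3_general (G : SimpleGraph V) (hG : IsPartialCube G) (x y : V)
    (P W : G.Walk x y) (hP : P.length = G.dist x y) :
    ∀ e ∈ P.edges, ∃ f ∈ W.edges, ThetaRel G e f := by
  intro e he
  obtain ⟨d, hd, rfl⟩ := List.mem_map.mp he
  obtain ⟨hx, hy⟩ := mem_wside_of_mem_darts hG.1 hP hd
  obtain ⟨f, hf, hfu, hfv⟩ :=
    W.exists_boundary_dart _ hx (notMem_wside_of_mem_wside hy)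
  exact ⟨f.edge, List.mem_map_of_mem hf, thetaRel_of_mem_wside_of_notMem_wside hfu hfv⟩

/-- If `P` is a geodesic and `W` any path with the same endpoints in a partial
cube, then every edge of `P` is Θ-equivalent to some edge of `W`. -/
theorem stmt_3 (G : SimpleGraph V) (hG : IsPartialCube G) (x y : V)
    (P W : G.Walk x y) (hP : P.length = G.dist x y) (hW : W.IsPath) :
    ∀ e ∈ P.edges, ∃ f ∈ W.edges, ThetaRel G e f :=
  stmt_3_general G hG x y P W hP
end

section
/- In a partial cube, every edge of a cycle C is Θ-equivalent to another edge of C distinct from itself. -/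
open SimpleGraph

universe u

variable {V : Type u}

/-! For an edge `ab` of a connected bipartite graph no vertex is equidistant from `a` and `b`, so
`W_ab` and `W_ba` partition the vertices. A cycle through `ab` crosses this cut an even number of
times, hence also along a second edge `uv` with `u ∈ W_ab`, `v ∈ W_ba`, and then
`d(a,u) + d(b,v) < d(a,v) + d(b,u)`. -/

lemma List.exists_mem_ne_of_even_countP {α : Type*} {L : List α} {q : α → Bool} {e : α}
    (hL : L.Nodup) (he : e ∈ L) (hqe : q e) (heven : Even (L.countP q)) :
    ∃ f ∈ L, f ≠ e ∧ q f := by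
  classical
  by_contra! h
  have : L.countP q = L.count e := by
    refine List.countP_congr fun f hf => ?_
    by_cases hfe : f = e <;> simp_all
  rw [this, List.count_eq_one_of_mem hL he] at heven
  exact Nat.not_even_one heven

namespace SimpleGraph

def crossesCut (χ : V → Bool) : Sym2 V → Bool :=
  Sym2.lift ⟨fun x y => χ x != χ y, fun _ _ => bne_comm⟩

@[simp]
lemma crossesCut_mk (χ : V → Bool) (x y : V) : crossesCut χ s(x, y) = (χ x != χ y) := rfl

lemma Walk.even_countP_crossesCut_iff {G : SimpleGraph V} (χ : V → Bool) {u v : V}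
    (p : G.Walk u v) : Even (p.edges.countP (crossesCut χ)) ↔ χ u = χ v := by
  induction p with
  | nil => simp
  | @cons u w v _ p ih =>
    rw [Walk.edges_cons, List.countP_cons, crossesCut_mk]
    cases hu : χ u <;> cases hw : χ w <;> cases hv : χ v <;> simp_all [Nat.even_add_one]

lemma dist_ne_dist_of_adj {G : SimpleGraph V} (c : G.Coloring Bool) {a b z : V}
    (hab : G.Adj a b) (haz : G.Reachable a z) : G.dist a z ≠ G.dist b z := by
  intro h
  obtain ⟨p, hp⟩ := haz.exists_walk_length_eq_dist
  obtain ⟨q, hq⟩ := (hab.symm.reachable.trans haz).exists_walk_length_eq_dist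
  have heven : Even (p.append q.reverse).length := by
    rw [Walk.length_append, Walk.length_reverse, hp, hq, h]
    exact ⟨_, rfl⟩
  exact c.valid hab (by simpa using (c.even_length_iff_congr _).1 heven)

lemma thetaRel_of_mem_wside {G : SimpleGraph V} {a b u v : V} (hu : u ∈ Wside G a b)
    (hv : v ∈ Wside G b a) : ThetaRel G s(a, b) s(u, v) :=
  ⟨a, b, u, v, rfl, rfl, by simp only [Wside, Set.mem_ofPred_eq] at hu hv; omega⟩

lemma wside_swap_eq_compl {G : SimpleGraph V} (c : G.Coloring Bool) (hconn : G.Connected)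
    {a b : V} (hab : G.Adj a b) : Wside G b a = (Wside G a b)ᶜ := by
  ext z
  have := dist_ne_dist_of_adj c hab (hconn a z)
  simp only [Wside, Set.mem_ofPred_eq, Set.mem_compl_iff]
  omega

end SimpleGraph

/-- In a partial cube, every edge of a cycle is Θ-equivalent to another edge of
that cycle. -/
theorem stmt_5 (G : SimpleGraph V) (hG : IsPartialCube G) (x : V)
    (C : G.Walk x x) (hC : C.IsCycle) :
    ∀ e ∈ C.edges, ∃ f ∈ C.edges, f ≠ e ∧ ThetaRel G e f := by
  classical
  obtain ⟨hconn, ⟨c, hc⟩, -⟩ := hG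
  intro e he
  induction e using Sym2.inductionOn with | hf a b => ?_
  have hab : G.Adj a b := C.edges_subset_edgeSet he
  have hW := wside_swap_eq_compl (Coloring.mk c (hc _ _)) hconn hab
  let χ : V → Bool := fun z => decide (z ∈ Wside G a b)
  have hab_cut : crossesCut χ s(a, b) := by
    simp [χ, Wside, dist_eq_one_iff_adj.2 hab, dist_eq_one_iff_adj.2 hab.symm]
  obtain ⟨f, hf, hfe, hf_cut⟩ := List.exists_mem_ne_of_even_countP hC.edges_nodup he hab_cut
    ((C.even_countP_crossesCut_iff χ).2 rfl)
  refine ⟨f, hf, hfe, ?_⟩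
  induction f using Sym2.inductionOn with | hf u v => ?_
  simp only [crossesCut_mk, χ, bne_iff_ne, ne_eq, decide_eq_decide] at hf_cut
  by_cases hu : u ∈ Wside G a b
  · exact thetaRel_of_mem_wside hu (by rw [hW]; tauto)
  · rw [Sym2.eq_swap]
    exact thetaRel_of_mem_wside (by rw [hW]; exact hu) (by tauto)
end

section
/- Every shortest cycle of a partial cube is a convex subgraph. -/
open SimpleGraph

universe u

variable {V : Type u}

/-!
Let `x, y` lie on a shortest cycle `C` and let `w` be a neighbour of `x` closer to `y`; it
suffices to show `w ∈ C`, for then any geodesic between two vertices of `C` can be followed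
inside `C` one edge at a time. Suppose `w ∉ C` and traverse `C` from `x`. If `c_p` is the first
vertex of `C` in `W_wx`, the arc `x … c_p`, a geodesic from `c_p` to `w` (inside the convex set
`W_wx`) and the edge `wx` form a cycle of length at most `2p`, so `|C| ≤ 2p`; the same holds for
the last vertex of `C` in `W_wx`, traversing `C` backwards. Hence `c_p` is the only vertex of `C`
in `W_wx`, so both its neighbours on `C` lie in `W_xw`. By bipartiteness `c_p` lies on a geodesic
between them, contradicting the convexity of `W_xw`.
-/

section

variable {G : SimpleGraph V} {u v w x y z : V}

namespace SimpleGraph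

lemma Reachable.exists_adj_dist_add_one_eq (hr : G.Reachable u v) (hne : u ≠ v) :
    ∃ w, G.Adj u w ∧ G.dist w v + 1 = G.dist u v := by
  obtain ⟨p, hp⟩ := hr.exists_walk_length_eq_dist
  have hnil : ¬ p.Nil := fun h => hne h.eq
  refine ⟨p.snd, p.adj_snd hnil, le_antisymm ?_ ?_⟩
  · have := dist_le p.tail
    have := p.length_tail_add_one hnil
    omega
  · have := p.tail.reachable.dist_triangle_right u
    rw [dist_eq_one_iff_adj.mpr (p.adj_snd hnil)] at this
    omega

namespace Walk

lemma mem_gInterval_of_length_eq_dist {p : G.Walk u v} (hp : p.length = G.dist u v)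
    (hz : z ∈ p.support) : z ∈ gInterval G u v := by
  classical
  have h1 := dist_le (p.takeUntil z hz)
  have h2 := dist_le (p.dropUntil z hz)
  have h3 : (p.takeUntil z hz).length + (p.dropUntil z hz).length = p.length := by
    rw [← length_append, take_spec]
  have h4 := (p.takeUntil z hz).reachable.dist_triangle_left v
  exact le_antisymm (by omega) h4

lemma isPath_append {p : G.Walk u v} {q : G.Walk v w} (hp : p.IsPath) (hq : q.IsPath)
    (hpq : ∀ z ∈ p.support, z ∈ q.support → z = v) : (p.append q).IsPath := by
  have hq' := hq.support_nodup
  rw [← cons_tail_support, List.nodup_cons] at hq'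
  rw [isPath_def, support_append]
  refine hp.support_nodup.append hq'.2 fun z hzp hzq => ?_
  obtain rfl := hpq z hzp (List.mem_of_mem_tail hzq)
  exact hq'.1 hzq

lemma IsCycle.exists_isCycle_of_gConvex {S : Set V} (hS : GConvex G S) (hadj : G.Adj x w)
    (hxS : x ∉ S) (hwS : w ∈ S) {W : G.Walk x x} (hW : W.IsCycle) (hw : w ∉ W.support)
    {p : ℕ} (hp : W.getVert p ∈ S) (hprev : ∀ j < p, W.getVert j ∉ S) :
    ∃ D : G.Walk w w, D.IsCycle ∧ D.length = p + G.dist (W.getVert p) w + 1 := by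
  have hpW : p < W.length := by
    by_contra! h
    rw [W.getVert_of_length_le h] at hp
    exact hxS hp
  set A := W.take p
  have hA : A.IsPath := hW.isPath_take hpW
  have hAlen : A.length = p := by simp [A, W.take_length, hpW.le]
  obtain ⟨Q, hQ, hQlen⟩ := (A.reachable.symm.trans hadj.reachable).exists_path_of_dist
  have hQS : ∀ z ∈ Q.support, z ∈ S := fun z hz =>
    hS _ hp _ hwS (Q.mem_gInterval_of_length_eq_dist hQlen hz)
  have hAS : ∀ z ∈ A.support, z ∈ S → z = W.getVert p := by
    intro z hz hzS
    obtain ⟨i, rfl, hi⟩ := mem_support_iff_exists_getVert.mp hz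
    rw [hAlen] at hi
    rw [take_getVert, min_eq_right hi] at hzS ⊢
    rcases hi.lt_or_eq with hi | rfl
    · exact absurd hzS (hprev i hi)
    · rfl
  have hwA : w ∉ A.support := fun h => hw ((W.isSubwalk_take p).support_subset h)
  refine ⟨cons hadj.symm (A.append Q), ?_, by simp [hAlen, hQlen]⟩
  refine (cons_isCycle_iff _ _).mpr
    ⟨isPath_append hA hQ fun z hz hzQ => hAS z hz (hQS z hzQ), fun he => ?_⟩
  rcases List.mem_append.mp (edges_append A Q ▸ he) with he | he
  · exact hwA (A.fst_mem_support_of_mem_edges he)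
  · exact hxS (hQS x (Q.snd_mem_support_of_mem_edges he))

end Walk

end SimpleGraph

lemma gConvex_of_forall_adj_dist_lt (hconn : G.Connected) {S : Set V}
    (hS : ∀ x ∈ S, ∀ y ∈ S, ∀ w, G.Adj x w → G.dist w y < G.dist x y → w ∈ S) :
    GConvex G S := by
  intro a ha b hb z hz
  induction hn : G.dist a z generalizing a with
  | zero => rwa [← hconn.dist_eq_zero_iff.mp hn]
  | succ n ih =>
    obtain ⟨w, hadj, hw⟩ := (hconn a z).exists_adj_dist_add_one_eq
      (fun h => by simp [h] at hn)
    have hz : G.dist a z + G.dist z b = G.dist a b := hz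
    have hwb := hconn.dist_triangle (u := w) (v := z) (w := b)
    have hab := hconn.dist_triangle (u := a) (v := w) (w := b)
    rw [dist_eq_one_iff_adj.mpr hadj] at hab
    exact ih w (hS a ha b hb w hadj (by omega)) (le_antisymm (by omega) hwb) (by omega)

lemma notMem_Wside_of_adj (hadj : G.Adj x w) : x ∉ Wside G w x := by
  simp [Wside, dist_eq_one_iff_adj.mpr hadj.symm]

lemma mem_Wside_self_of_adj (hadj : G.Adj x w) : w ∈ Wside G w x := by
  simp [Wside, dist_eq_one_iff_adj.mpr hadj]

namespace IsBipartiteGraph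

lemma dist_ne_of_adj_s6 (hG : IsBipartiteGraph G) (hadj : G.Adj x w) (hu : G.Reachable x u) :
    G.dist x u ≠ G.dist w u := by
  obtain ⟨col, hcol⟩ := hG
  let c : G.Coloring Bool := Coloring.mk col fun h => hcol _ _ h
  obtain ⟨p, hp⟩ := hu.exists_walk_length_eq_dist
  obtain ⟨q, hq⟩ := (hadj.symm.reachable.trans hu).exists_walk_length_eq_dist
  have hp' := c.even_length_iff_congr p
  have hq' := c.even_length_iff_congr q
  have hxw := c.valid hadj
  intro h
  rw [hp, h, ← hq, hq'] at hp'
  revert hp' hxw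
  cases c x <;> cases c w <;> cases c u <;> simp

lemma mem_gInterval_of_adj_of_adj (hG : IsBipartiteGraph G) (hum : G.Adj u w)
    (hmv : G.Adj w v) (hne : u ≠ v) : w ∈ gInterval G u v := by
  obtain ⟨col, hcol⟩ := hG
  have hnadj : ¬ G.Adj u v := fun huv => by
    have h1 := hcol _ _ hum
    have h2 := hcol _ _ hmv
    have h3 := hcol _ _ huv
    revert h1 h2 h3
    cases col u <;> cases col w <;> cases col v <;> simp
  have hlt := (hum.reachable.trans hmv.reachable).one_lt_dist_of_ne_of_not_adj hne hnadj
  have hle := dist_le (Walk.cons hum (Walk.cons hmv Walk.nil))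
  simp only [Walk.length_cons, Walk.length_nil] at hle
  show G.dist u w + G.dist w v = G.dist u v
  rw [dist_eq_one_iff_adj.mpr hum, dist_eq_one_iff_adj.mpr hmv]
  omega

end IsBipartiteGraph

namespace IsPartialCube

lemma mem_Wside_of_notMem_Wside (hG : IsPartialCube G) (hadj : G.Adj x w)
    (hu : u ∉ Wside G w x) : u ∈ Wside G x w :=
  (lt_or_gt_of_ne (hG.2.1.dist_ne_of_adj_s6 hadj (hG.1 x u))).resolve_right hu

lemma length_le_two_mul (hG : IsPartialCube G) (hadj : G.Adj x w) {W : G.Walk x x}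
    (hW : W.IsCycle) (hmin : ∀ (y : V) (D : G.Walk y y), D.IsCycle → W.length ≤ D.length)
    (hw : w ∉ W.support) {p : ℕ} (hp : W.getVert p ∈ Wside G w x)
    (hprev : ∀ j < p, W.getVert j ∉ Wside G w x) : W.length ≤ 2 * p := by
  obtain ⟨D, hD, hDlen⟩ := hW.exists_isCycle_of_gConvex (hG.2.2 x w hadj).2 hadj
    (notMem_Wside_of_adj hadj) (mem_Wside_self_of_adj hadj) hw hp hprev
  have hxp : G.dist x (W.getVert p) ≤ p := (dist_le (W.take p)).trans (by simp)
  have hwp : G.dist w (W.getVert p) < G.dist x (W.getVert p) := hp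
  have := hmin w D hD
  rw [dist_comm] at hDlen
  omega

lemma mem_support_of_adj_of_dist_lt (hG : IsPartialCube G) {W : G.Walk x x} (hW : W.IsCycle)
    (hmin : ∀ (y : V) (D : G.Walk y y), D.IsCycle → W.length ≤ D.length)
    (hy : y ∈ W.support) (hadj : G.Adj x w) (hwy : G.dist w y < G.dist x y) :
    w ∈ W.support := by
  classical
  by_contra hw
  obtain ⟨i, rfl, hi⟩ := Walk.mem_support_iff_exists_getVert.mp hy
  have hfirst : ∃ j, W.getVert j ∈ Wside G w x := ⟨i, hwy⟩
  have hlast : ∃ j, W.reverse.getVert j ∈ Wside G w x :=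
    ⟨W.length - i, by rwa [Walk.getVert_reverse, Nat.sub_sub_self hi]⟩
  set p := Nat.find hfirst
  set r := Nat.find hlast
  -- `p` and `W.length - r` are the first and last positions of `W` in `W_wx`
  have hpS : W.getVert p ∈ Wside G w x := Nat.find_spec hfirst
  have hp : W.length ≤ 2 * p :=
    hG.length_le_two_mul hadj hW hmin hw hpS fun j hj => Nat.find_min hfirst hj
  have hr : W.length ≤ 2 * r := by
    simpa using hG.length_le_two_mul hadj hW.reverse (by simpa using hmin) (by simpa using hw)
      (Nat.find_spec hlast) fun j hj => Nat.find_min hlast hj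
  have hpW : p < W.length := by
    by_contra! h
    rw [W.getVert_of_length_le h] at hpS
    exact notMem_Wside_of_adj hadj hpS
  have hp0 : 0 < p := by
    by_contra! h
    rw [Nat.le_zero.mp h, W.getVert_zero] at hpS
    exact notMem_Wside_of_adj hadj hpS
  have hpred : W.getVert (p - 1) ∈ Wside G x w :=
    hG.mem_Wside_of_notMem_Wside hadj (Nat.find_min hfirst (by omega))
  have hsucc : W.getVert (p + 1) ∈ Wside G x w := hG.mem_Wside_of_notMem_Wside hadj fun h => by
    have : r ≤ W.length - (p + 1) := Nat.find_min' hlast (by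
      rwa [Walk.getVert_reverse, Nat.sub_sub_self (by omega : p + 1 ≤ W.length)])
    omega
  have hadj₁ : G.Adj (W.getVert (p - 1)) (W.getVert p) := by
    simpa [Nat.sub_add_cancel hp0] using W.adj_getVert_succ (i := p - 1) (by omega)
  have hmid := hG.2.1.mem_gInterval_of_adj_of_adj hadj₁ (W.adj_getVert_succ hpW)
    (hW.getVert_sub_one_ne_getVert_add_one hpW.le)
  exact lt_asymm ((hG.2.2 x w hadj).1 _ hpred _ hsucc hmid) hpS.out

end IsPartialCube

end

/-- Every shortest cycle of a partial cube is convex. -/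
theorem stmt_6 (G : SimpleGraph V) (hG : IsPartialCube G) (x : V)
    (C : G.Walk x x) (hC : C.IsCycle)
    (hmin : ∀ (y : V) (D : G.Walk y y), D.IsCycle → C.length ≤ D.length) :
    GConvex G {v | v ∈ C.support} := by
  classical
  refine gConvex_of_forall_adj_dist_lt hG.1 fun a ha b hb w hadj hwb => ?_
  exact (C.mem_support_rotate_iff a ha).mp <| hG.mem_support_of_adj_of_dist_lt (hC.rotate ha)
    (by simpa using hmin) ((C.mem_support_rotate_iff a ha).mpr hb) hadj hwb
end

section
/- Let H be a connected subgraph of a partial cube G. Then every edge of the convex hull of H is Θ-equivalent to some edge of H. -/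
open SimpleGraph

universe u

variable {V : Type u}

/-!
Let `xy` be an edge of the hull. Since `G` is bipartite, the half-spaces `W_xy` and `W_yx` split
the vertex set, and they are convex. If `H` lay inside one of them, so would its convex hull,
which contains both `x ∈ W_xy` and `y ∈ W_yx`. Hence `H` meets both half-spaces, and as `H` is
connected some edge `uv` of `H` crosses from `W_xy` to `W_yx`; such an edge is in relation Θ
with `xy`.
-/

namespace SimpleGraph.Subgraph

theorem Connected.exists_adj_mem_notMem {G : SimpleGraph V} {H : G.Subgraph}
    (hH : H.Connected) (S : Set V) {u v : V} (hu : u ∈ H.verts) (huS : u ∈ S)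
    (hv : v ∈ H.verts) (hvS : v ∉ S) : ∃ a b, H.Adj a b ∧ a ∈ S ∧ b ∉ S := by
  obtain ⟨p⟩ := hH.preconnected ⟨u, hu⟩ ⟨v, hv⟩
  obtain ⟨d, -, hd, hd'⟩ := p.exists_boundary_dart (Subtype.val ⁻¹' S) huS hvS
  exact ⟨_, _, d.adj, hd, hd'⟩

end SimpleGraph.Subgraph

section PartialCube

variable {G : SimpleGraph V}

theorem gConvexHull_subset {A C : Set V} (hC : GConvex G C) (hAC : A ⊆ C) :
    gConvexHull G A ⊆ C :=
  Set.sInter_subset_of_mem ⟨hC, hAC⟩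

theorem left_mem_Wside {x y : V} (hxy : G.Adj x y) : x ∈ Wside G x y := by
  simp [Wside, dist_eq_one_iff_adj.2 hxy.symm]

theorem notMem_Wside_of_mem_Wside {x y u : V} (hu : u ∈ Wside G x y) : u ∉ Wside G y x :=
  (lt_asymm hu : ¬G.dist y u < G.dist x u)

theorem IsBipartiteGraph.dist_ne_dist_of_adj (hG : IsBipartiteGraph G) (hconn : G.Preconnected)
    {a b : V} (hab : G.Adj a b) (u : V) : G.dist a u ≠ G.dist b u := by
  obtain ⟨c, hc⟩ := hG
  let col : G.Coloring Bool := Coloring.mk c fun h ↦ hc _ _ h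
  obtain ⟨p, hp⟩ := (hconn a u).exists_walk_length_eq_dist
  obtain ⟨q, hq⟩ := (hconn b u).exists_walk_length_eq_dist
  have hpar := col.even_length_iff_congr p
  have hpar' := col.even_length_iff_congr (q.cons hab)
  rw [Walk.length_cons, hq, Nat.even_add_one, ← hpar, hp] at hpar'
  intro h
  rw [h] at hpar'
  tauto

theorem IsBipartiteGraph.mem_Wside_or_mem_Wside (hG : IsBipartiteGraph G)
    (hconn : G.Preconnected) {x y : V} (hxy : G.Adj x y) (u : V) :
    u ∈ Wside G x y ∨ u ∈ Wside G y x :=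
  lt_or_gt_of_ne (hG.dist_ne_dist_of_adj hconn hxy u)

theorem thetaRel_of_mem_Wside {x y u v : V} (hu : u ∈ Wside G x y) (hv : v ∈ Wside G y x) :
    ThetaRel G s(x, y) s(u, v) := by
  refine ⟨x, y, u, v, rfl, rfl, ?_⟩
  have : G.dist x u + G.dist y v < G.dist y u + G.dist x v := add_lt_add hu hv
  omega

theorem not_subset_Wside_of_mem_gConvexHull {A : Set V} {x y : V} (hxy : G.Adj x y)
    (hconv : GConvex G (Wside G x y)) (hy : y ∈ gConvexHull G A) : ¬A ⊆ Wside G x y :=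
  fun hA ↦ notMem_Wside_of_mem_Wside (gConvexHull_subset hconv hA hy) (left_mem_Wside hxy.symm)

end PartialCube

/-- Every edge of the convex hull of a connected subgraph `H` of a partial cube
is Θ-equivalent to some edge of `H`. -/
theorem stmt_8 (G : SimpleGraph V) (hG : IsPartialCube G) (H : G.Subgraph)
    (hH : H.Connected) (x y : V) (hxy : G.Adj x y)
    (hx : x ∈ gConvexHull G H.verts) (hy : y ∈ gConvexHull G H.verts) :
    ∃ u v, H.Adj u v ∧ ThetaRel G s(x, y) s(u, v) := by
  obtain ⟨hconn, hbip, hconv⟩ := hG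
  have cover := hbip.mem_Wside_or_mem_Wside hconn.preconnected hxy
  obtain ⟨u, hu, hu'⟩ :=
    Set.not_subset.1 (not_subset_Wside_of_mem_gConvexHull hxy.symm (hconv y x hxy.symm).1 hx)
  obtain ⟨v, hv, hv'⟩ :=
    Set.not_subset.1 (not_subset_Wside_of_mem_gConvexHull hxy (hconv x y hxy).1 hy)
  obtain ⟨a, b, hab, ha, hb⟩ :=
    hH.exists_adj_mem_notMem (Wside G x y) hu ((cover u).resolve_right hu') hv hv'
  exact ⟨a, b, hab, thetaRel_of_mem_Wside ha ((cover b).resolve_left hb)⟩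
end

section
/- Let H be a subgraph of a partial cube G such that every edge of G is Θ-equivalent to an edge of H. Then the convex hull of H is all of G. -/
/-!
In a connected bipartite graph the two ends of an edge `xy` have distances to any vertex
differing by exactly one. If `xy` is Θ-related to an edge `uv`, then `y` is strictly closer than
`x` to `u` or to `v`, since otherwise the two distance sums defining Θ would agree; so `y` lies on
a geodesic from `x` to `u` or to `v`. Hence a convex set containing `x`, `u` and `v` contains
`y`, and the convex hull of `H` is closed under adjacency. By connectivity it is everything.
-/

open SimpleGraph

universe u

variable {V : Type u}

section

variable {G : SimpleGraph V}

lemma IsBipartiteGraph.dist_ne_of_adj_s9 (hb : IsBipartiteGraph G) (hconn : G.Connected)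
    {x y : V} (hxy : G.Adj x y) (z : V) : G.dist x z ≠ G.dist y z := by
  obtain ⟨c, hc⟩ := hb
  let col : G.Coloring Bool := Coloring.mk c fun h => hc _ _ h
  obtain ⟨q, hq⟩ := (hconn y z).exists_walk_length_eq_dist
  obtain ⟨p, hp⟩ := (hconn x z).exists_walk_length_eq_dist
  have hpar : Even (G.dist x z) ↔ Even (G.dist y z + 1) := by
    rw [← hp, ← hq, col.even_length_iff_congr p, ← Walk.length_cons hxy q,
      col.even_length_iff_congr]
  intro heq
  rw [heq, Nat.even_add_one] at hpar
  tauto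

lemma IsBipartiteGraph.dist_eq_add_one_or_of_adj (hb : IsBipartiteGraph G)
    (hconn : G.Connected) {x y : V} (hxy : G.Adj x y) (z : V) :
    G.dist x z = G.dist y z + 1 ∨ G.dist y z = G.dist x z + 1 := by
  have hne := hb.dist_ne_of_adj_s9 hconn hxy z
  rw [dist_comm, dist_comm (u := y)] at hne ⊢
  rcases hxy.diff_dist_adj (u := z) with h | h | h <;> omega

lemma ThetaRel.dist_add_ne {x y u v : V} (hθ : ThetaRel G s(x, y) s(u, v)) :
    G.dist x u + G.dist y v ≠ G.dist x v + G.dist y u := by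
  obtain ⟨x', y', u', v', he, hf, hne⟩ := hθ
  rw [Sym2.eq_iff] at he hf
  rcases he with ⟨rfl, rfl⟩ | ⟨rfl, rfl⟩ <;>
    rcases hf with ⟨rfl, rfl⟩ | ⟨rfl, rfl⟩ <;> omega

lemma IsBipartiteGraph.mem_gInterval_or_of_thetaRel (hb : IsBipartiteGraph G)
    (hconn : G.Connected) {x y u v : V} (hxy : G.Adj x y) (hθ : ThetaRel G s(x, y) s(u, v)) :
    y ∈ gInterval G x u ∨ y ∈ gInterval G x v := by
  have hsum := hθ.dist_add_ne
  have hdu := hb.dist_eq_add_one_or_of_adj hconn hxy u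
  have hdv := hb.dist_eq_add_one_or_of_adj hconn hxy v
  have hxy1 : G.dist x y = 1 := dist_eq_one_iff_adj.mpr hxy
  simp only [gInterval, Set.mem_ofPred_eq]
  omega

lemma GConvex.mem_of_adj_of_thetaRel {C : Set V} (hC : GConvex G C) (hb : IsBipartiteGraph G)
    (hconn : G.Connected) {x y u v : V} (hxy : G.Adj x y) (hθ : ThetaRel G s(x, y) s(u, v))
    (hx : x ∈ C) (hu : u ∈ C) (hv : v ∈ C) : y ∈ C := by
  rcases hb.mem_gInterval_or_of_thetaRel hconn hxy hθ with h | h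
  · exact hC x hx u hu h
  · exact hC x hx v hv h

lemma subset_gConvexHull (A : Set V) : A ⊆ gConvexHull G A :=
  fun _ ha _ hC => hC.2 ha

lemma gConvex_gConvexHull (A : Set V) : GConvex G (gConvexHull G A) :=
  fun x hx y hy _ hz C hC => hC.1 x (hx C hC) y (hy C hC) hz

lemma SimpleGraph.Reachable.mem_of_forall_adj_mem {S : Set V}
    (hS : ∀ x y, x ∈ S → G.Adj x y → y ∈ S)
    {a b : V} (hab : G.Reachable a b) (ha : a ∈ S) : b ∈ S := by
  obtain ⟨p⟩ := hab
  induction p with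
  | nil => exact ha
  | cons hadj _ ih => exact ih (hS _ _ ha hadj)

end

/-- If every edge of a partial cube `G` is Θ-equivalent to an edge of a subgraph
`H`, then the convex hull of `H` is all of `G`. -/
theorem stmt_9 (G : SimpleGraph V) (hG : IsPartialCube G) (H : G.Subgraph)
    (hne : H.verts.Nonempty)
    (h : ∀ x y, G.Adj x y → ∃ u v, H.Adj u v ∧ ThetaRel G s(x, y) s(u, v)) :
    gConvexHull G H.verts = Set.univ := by
  obtain ⟨hconn, hb, -⟩ := hG
  have hH := subset_gConvexHull (G := G) H.verts
  have hclosed :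
      ∀ x y, x ∈ gConvexHull G H.verts → G.Adj x y → y ∈ gConvexHull G H.verts := by
    intro x y hx hxy
    obtain ⟨u, v, huv, hθ⟩ := h x y hxy
    exact (gConvex_gConvexHull H.verts).mem_of_adj_of_thetaRel hb hconn hxy hθ hx
      (hH (H.edge_vert huv)) (hH (H.edge_vert huv.symm))
  obtain ⟨a, ha⟩ := hne
  exact Set.eq_univ_of_forall fun z => (hconn a z).mem_of_forall_adj_mem hclosed (hH ha)
end

section
/- The pre-hull number of a connected bipartite graph G is zero if and only if G is a tree, i.e., every copoint of the geodesic convexity of G is already convexly extended by one application of the interval operator with exponent 0 exactly when G has no cycles. -/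
/-
In a tree, a copoint `C` at `x` is the component of `T - x` containing any point
of `C`: that component is convex because paths in a tree are unique, and it contains `C` because
geodesics between points of `C` stay in `C`. A geodesic from `C` to `x` runs inside this
component until it reaches `x`, so `C ∪ {x}` is convex.

Conversely, fix a root `r` and take a vertex `m` of a cycle farthest from `r`. In a bipartite
graph adjacent vertices have different distances to `r`, so both cycle-neighbours `w₁ ≠ w₂` of
`m` lie in `I(r, m)`. A copoint `C` at `m` containing `r` with `C ∪ {m}` convex then contains
`w₁` and `w₂`, which are at distance `2` through `m`; convexity of `C` forces `m ∈ C`.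
-/

open SimpleGraph

universe u

variable {V : Type u}

/-- A copoint at `x`: a convex set maximal with respect to not containing `x`. -/
def IsCopoint (G : SimpleGraph V) (C : Set V) (x : V) : Prop :=
  GConvex G C ∧ x ∉ C ∧ ∀ D : Set V, GConvex G D → C ⊆ D → x ∉ D → D = C

namespace SimpleGraph

variable {G : SimpleGraph V}

lemma mem_gInterval {u w z : V} :
    z ∈ gInterval G u w ↔ G.dist u z + G.dist z w = G.dist u w :=
  Iff.rfl

lemma gInterval_comm (u w : V) : gInterval G u w = gInterval G w u := by
  ext z
  rw [mem_gInterval, mem_gInterval, dist_comm (u := u), dist_comm (u := z) (v := w),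
    dist_comm (u := u) (v := w), Nat.add_comm]

lemma Connected.gInterval_self (hconn : G.Connected) (v : V) : gInterval G v v = {v} := by
  ext z
  simp only [mem_gInterval, dist_self, Set.mem_singleton_iff]
  rw [Nat.add_eq_zero_iff, hconn.dist_eq_zero_iff, eq_comm]
  exact and_iff_left_of_imp fun h => h ▸ dist_self

lemma Connected.mem_gInterval_iff_exists_walk (hconn : G.Connected) {u w z : V} :
    z ∈ gInterval G u w ↔ ∃ W : G.Walk u w, W.length = G.dist u w ∧ z ∈ W.support := by
  constructor
  · intro hz
    obtain ⟨A, hA⟩ := hconn.exists_walk_length_eq_dist u z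
    obtain ⟨B, hB⟩ := hconn.exists_walk_length_eq_dist z w
    refine ⟨A.append B, ?_, (A.mem_support_append_iff B).2 (Or.inl A.end_mem_support)⟩
    rw [Walk.length_append, hA, hB]
    exact hz
  · rintro ⟨W, hW, hz⟩
    classical
    have h₁ : G.dist u z ≤ (W.takeUntil z hz).length := dist_le _
    have h₂ : G.dist z w ≤ (W.dropUntil z hz).length := dist_le _
    have hsplit : (W.takeUntil z hz).length + (W.dropUntil z hz).length = W.length := by
      rw [← Walk.length_append, W.take_spec hz]
    have htri : G.dist u w ≤ G.dist u z + G.dist z w := hconn.dist_triangle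
    rw [mem_gInterval]
    omega

lemma Connected.eq_of_mem_gInterval_of_mem_gInterval (hconn : G.Connected) {p x z : V}
    (hx : x ∈ gInterval G p z) (hz : z ∈ gInterval G p x) : x = z := by
  rw [mem_gInterval] at hx hz
  rw [← hconn.dist_eq_zero_iff]
  omega

lemma Connected.mem_gInterval_of_adj_of_dist_lt (hconn : G.Connected) {r w m : V}
    (hadj : G.Adj w m) (hlt : G.dist r w < G.dist r m) : w ∈ gInterval G r m := by
  have hwm : G.dist w m = 1 := dist_eq_one_iff_adj.2 hadj
  have htri : G.dist r m ≤ G.dist r w + G.dist w m := hconn.dist_triangle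
  rw [mem_gInterval]
  omega

lemma Connected.gConvex_singleton (hconn : G.Connected) (v : V) : GConvex G {v} := by
  intro a ha b hb
  rw [Set.mem_singleton_iff.1 ha, Set.mem_singleton_iff.1 hb, hconn.gInterval_self]

lemma gConvex_sUnion_of_isChain {S : Set (Set V)} (hS : ∀ D ∈ S, GConvex G D)
    (hchain : IsChain (· ⊆ ·) S) : GConvex G (⋃₀ S) := by
  rintro a ⟨Da, hDa, ha⟩ b ⟨Db, hDb, hb⟩
  rcases hchain.total hDa hDb with hsub | hsub
  · exact (hS Db hDb a (hsub ha) b hb).trans (Set.subset_sUnion_of_mem hDb)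
  · exact (hS Da hDa a ha b (hsub hb)).trans (Set.subset_sUnion_of_mem hDa)

lemma GConvex.union_singleton_of_gInterval_subset (hconn : G.Connected) {C : Set V} {x : V}
    (hC : GConvex G C) (hCx : ∀ p ∈ C, gInterval G p x ⊆ C ∪ {x}) : GConvex G (C ∪ {x}) := by
  rintro a (ha | ha) b (hb | hb)
  · exact (hC a ha b hb).trans Set.subset_union_left
  · rw [Set.mem_singleton_iff.1 hb]
    exact hCx a ha
  · rw [Set.mem_singleton_iff.1 ha, gInterval_comm]
    exact hCx b hb
  · rw [Set.mem_singleton_iff.1 ha, Set.mem_singleton_iff.1 hb, hconn.gInterval_self]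
    exact Set.subset_union_right

lemma exists_isCopoint_superset {K : Set V} {x : V} (hK : GConvex G K) (hx : x ∉ K) :
    ∃ C, IsCopoint G C x ∧ K ⊆ C := by
  obtain ⟨C, hKC, ⟨hCconv, hxC, -⟩, hmax⟩ :=
    zorn_subset_nonempty {D : Set V | GConvex G D ∧ x ∉ D ∧ K ⊆ D}
      (fun S hS hchain ⟨D, hD⟩ =>
        ⟨⋃₀ S, ⟨gConvex_sUnion_of_isChain (fun D hD => (hS hD).1) hchain,
            fun ⟨D', hD', hxD'⟩ => (hS hD').2.1 hxD',
            (hS hD).2.2.trans (Set.subset_sUnion_of_mem hD)⟩,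
          fun _ => Set.subset_sUnion_of_mem⟩)
      K ⟨hK, hx, subset_rfl⟩
  exact ⟨C, ⟨hCconv, hxC, fun D hD hCD hxD =>
    (hmax ⟨hD, hxD, hKC.trans hCD⟩ hCD).antisymm hCD⟩, hKC⟩

lemma Coloring.even_dist_iff (c : G.Coloring Bool) {u v : V} (h : G.Reachable u v) :
    Even (G.dist u v) ↔ (c u ↔ c v) := by
  obtain ⟨W, hW⟩ := h.exists_walk_length_eq_dist
  rw [← hW, c.even_length_iff_congr]

lemma Coloring.dist_ne_of_adj (c : G.Coloring Bool) {u a b : V} (hu : G.Reachable u a)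
    (hab : G.Adj a b) : G.dist u a ≠ G.dist u b := by
  intro heq
  have hsame : (c u ↔ c a) ↔ (c u ↔ c b) := by
    rw [← c.even_dist_iff hu, ← c.even_dist_iff (hu.trans hab.reachable), heq]
  exact c.valid hab (Bool.eq_iff_iff.2 (by tauto))

lemma Coloring.dist_eq_two_of_adj_of_adj (c : G.Coloring Bool) {w₁ m w₂ : V}
    (h₁ : G.Adj w₁ m) (h₂ : G.Adj m w₂) (hne : w₁ ≠ w₂) : G.dist w₁ w₂ = 2 := by
  have hreach : G.Reachable w₁ w₂ := h₁.reachable.trans h₂.reachable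
  have heven : Even (G.dist w₁ w₂) := by
    have h₁' : c w₁ ≠ c m := c.valid h₁
    have h₂' : c m ≠ c w₂ := c.valid h₂
    rw [c.even_dist_iff hreach, ← Bool.eq_iff_iff,
      Bool.eq_not.2 h₁', Bool.eq_not.2 h₂', Bool.not_not]
  have hle : G.dist w₁ w₂ ≤ 2 := dist_le (Walk.cons h₁ (Walk.cons h₂ Walk.nil))
  have hpos : G.dist w₁ w₂ ≠ 0 := fun h => hne ((hreach.dist_eq_zero_iff).1 h)
  obtain ⟨k, hk⟩ := heven
  omega

theorem isAcyclic_of_lower_neighbor_unique (f : V → ℕ) (hf : ∀ a b, G.Adj a b → f a ≠ f b)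
    (huniq : ∀ m w₁ w₂, G.Adj m w₁ → G.Adj m w₂ → f w₁ < f m → f w₂ < f m → w₁ = w₂) :
    G.IsAcyclic := by
  classical
  intro v c hc
  -- on the cycle rotated to start at a vertex maximizing `f`, the two neighbours are both lower
  obtain ⟨m, hm, hmax⟩ := c.support.toFinset.exists_max_image f ⟨v, by simp⟩
  rw [List.mem_toFinset] at hm
  have hc' : (c.rotate m hm).IsCycle := hc.rotate hm
  have lower : ∀ i, G.Adj m ((c.rotate m hm).getVert i) →
      f ((c.rotate m hm).getVert i) < f m := fun i hadj =>
    lt_of_le_of_ne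
      (hmax _ (List.mem_toFinset.2
        ((c.mem_support_rotate_iff m hm).1 (Walk.getVert_mem_support _ i))))
      (hf _ _ hadj).symm
  exact hc'.snd_ne_penultimate <| huniq m _ _ (Walk.adj_snd hc'.not_nil)
    (Walk.adj_penultimate hc'.not_nil).symm (lower _ (Walk.adj_snd hc'.not_nil))
    (lower _ (Walk.adj_penultimate hc'.not_nil).symm)

lemma eq_of_adj_of_dist_lt_of_forall_isCopoint (hconn : G.Connected) (c : G.Coloring Bool)
    (H : ∀ (x : V) (C : Set V), IsCopoint G C x → GConvex G (C ∪ {x})) {r m w₁ w₂ : V}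
    (h₁ : G.Adj m w₁) (h₂ : G.Adj m w₂) (hd₁ : G.dist r w₁ < G.dist r m)
    (hd₂ : G.dist r w₂ < G.dist r m) : w₁ = w₂ := by
  by_contra hne
  have hrm : r ≠ m := by
    rintro rfl
    simp at hd₁
  obtain ⟨C, hC, hrC⟩ := exists_isCopoint_superset (hconn.gConvex_singleton r)
    fun h => hrm (Set.mem_singleton_iff.1 h).symm
  have mem_C : ∀ w, G.Adj m w → G.dist r w < G.dist r m → w ∈ C := fun w hw hd =>
    (H m C hC r (Or.inl (hrC rfl)) m (Or.inr rfl)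
      (hconn.mem_gInterval_of_adj_of_dist_lt hw.symm hd)).resolve_right hw.ne'
  have hm : m ∈ gInterval G w₁ w₂ := by
    rw [mem_gInterval, dist_comm, dist_eq_one_iff_adj.2 h₁, dist_eq_one_iff_adj.2 h₂,
      c.dist_eq_two_of_adj_of_adj h₁.symm h₂ hne]
  exact hC.2.1 (hC.1 w₁ (mem_C _ h₁ hd₁) w₂ (mem_C _ h₂ hd₂) hm)

theorem isTree_of_forall_isCopoint_gConvex_union (hconn : G.Connected)
    (hbip : IsBipartiteGraph G)
    (H : ∀ (x : V) (C : Set V), IsCopoint G C x → GConvex G (C ∪ {x})) : G.IsTree := by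
  obtain ⟨col, hcol⟩ := hbip
  let c : G.Coloring Bool := Coloring.mk col fun h => hcol _ _ h
  obtain ⟨r⟩ := hconn.nonempty
  exact ⟨hconn, isAcyclic_of_lower_neighbor_unique (G.dist r)
    (fun a b hab => c.dist_ne_of_adj (hconn r a) hab)
    fun _ _ _ h₁ h₂ hd₁ hd₂ => eq_of_adj_of_dist_lt_of_forall_isCopoint hconn c H h₁ h₂ hd₁ hd₂⟩

/-- The vertex set of the component of `G - x` containing `p` (empty when `p = x`). -/
def componentAvoiding (G : SimpleGraph V) (x p : V) : Set V :=
  {w | ∃ W : G.Walk p w, x ∉ W.support}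

lemma not_mem_componentAvoiding {x p : V} : x ∉ componentAvoiding G x p :=
  fun ⟨W, hW⟩ => hW W.end_mem_support

lemma mem_componentAvoiding_of_mem_support {x p w y : V} (W : G.Walk p w) (hW : x ∉ W.support)
    (hy : y ∈ W.support) : y ∈ componentAvoiding G x p := by
  classical
  exact ⟨W.takeUntil y hy, fun h => hW (W.support_takeUntil_subset_support hy h)⟩

lemma IsTree.gConvex_componentAvoiding (htree : G.IsTree) (x p : V) :
    GConvex G (componentAvoiding G x p) := by
  classical
  rintro a ⟨Wa, hWa⟩ b ⟨Wb, hWb⟩ y hy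
  obtain ⟨Wg, hWg, hyWg⟩ := htree.connected.mem_gInterval_iff_exists_walk.1 hy
  set W := Wa.reverse.append Wb
  have hgeod : Wg = W.bypass := (htree.existsUnique_path a b).unique
    (Wg.isPath_of_length_eq_dist hWg) W.bypass_isPath
  rcases (Wa.reverse.mem_support_append_iff Wb).1 (W.support_bypass_subset_support (hgeod ▸ hyWg))
    with h | h
  · exact mem_componentAvoiding_of_mem_support Wa hWa (by simpa using h)
  · exact mem_componentAvoiding_of_mem_support Wb hWb h

lemma GConvex.subset_componentAvoiding (hconn : G.Connected) {C : Set V} {x p : V}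
    (hC : GConvex G C) (hp : p ∈ C) (hx : x ∉ C) : C ⊆ componentAvoiding G x p := by
  intro q hq
  obtain ⟨W, hW⟩ := hconn.exists_walk_length_eq_dist p q
  exact ⟨W, fun hxW => hx (hC p hp q hq (hconn.mem_gInterval_iff_exists_walk.2 ⟨W, hW, hxW⟩))⟩

lemma Connected.mem_componentAvoiding_of_mem_gInterval (hconn : G.Connected) {x p z : V}
    (hz : z ∈ gInterval G p x) (hzx : z ≠ x) : z ∈ componentAvoiding G x p := by
  obtain ⟨W, hW⟩ := hconn.exists_walk_length_eq_dist p z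
  exact ⟨W, fun hxW => hzx (hconn.eq_of_mem_gInterval_of_mem_gInterval
    (hconn.mem_gInterval_iff_exists_walk.2 ⟨W, hW, hxW⟩) hz).symm⟩

lemma IsTree.eq_componentAvoiding_of_isCopoint (htree : G.IsTree) {C : Set V} {x p : V}
    (hC : IsCopoint G C x) (hp : p ∈ C) : C = componentAvoiding G x p :=
  (hC.2.2 _ (htree.gConvex_componentAvoiding x p)
    (hC.1.subset_componentAvoiding htree.connected hp hC.2.1) not_mem_componentAvoiding).symm

lemma IsTree.gConvex_union_singleton_of_isCopoint (htree : G.IsTree) {C : Set V} {x : V}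
    (hC : IsCopoint G C x) : GConvex G (C ∪ {x}) := by
  refine hC.1.union_singleton_of_gInterval_subset htree.connected fun p hp z hz => ?_
  by_cases hzx : z = x
  · exact Or.inr hzx
  · rw [htree.eq_componentAvoiding_of_isCopoint hC hp]
    exact Or.inl (htree.connected.mem_componentAvoiding_of_mem_gInterval hz hzx)

end SimpleGraph

/-- A connected bipartite graph has pre-hull number zero (each copoint extended
by an attaching point is already convex) iff it is a tree. -/
theorem stmt_14 (G : SimpleGraph V) (hconn : G.Connected)
    (hbip : IsBipartiteGraph G) :
    (∀ (x : V) (C : Set V), IsCopoint G C x → GConvex G (C ∪ {x})) ↔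
      G.IsTree :=
  ⟨isTree_of_forall_isCopoint_gConvex_union hconn hbip,
    fun htree _ _ hC => htree.gConvex_union_singleton_of_isCopoint hC⟩
end

section
/- The Cartesian product G □ H of two graphs is antipodal if and only if both G and H are antipodal. -/
open SimpleGraph

universe u

variable {V : Type u}

/-- An antipodal graph: connected, and every vertex `x` has an antipode `y`
with `I(x,y)` the whole vertex set. -/
def IsAntipodal {W : Type*} (G : SimpleGraph W) : Prop :=
  G.Connected ∧ ∀ x : W, ∃ y : W, gInterval G x y = Set.univ

/-! Distances in `G □ H` add coordinatewise and each coordinate obeys the triangle inequality, so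
`z` lies on a geodesic from `x` to `y` in the product iff each coordinate of `z` lies on a
geodesic in its factor: `I(x, y) = I(x₁, y₁) × I(x₂, y₂)`. Since a product of nonempty sets is
everything iff both factors are, the antipodes of `(x₁, x₂)` are exactly the pairs of antipodes. -/

section BoxProd

variable {V₁ V₂ : Type*} {G : SimpleGraph V₁} {H : SimpleGraph V₂}

lemma SimpleGraph.Connected.dist_boxProd (hG : G.Connected) (hH : H.Connected)
    (x y : V₁ × V₂) : (G □ H).dist x y = G.dist x.1 y.1 + H.dist x.2 y.2 := by
  have h : ((G □ H).dist x y : ℕ∞) = G.dist x.1 y.1 + H.dist x.2 y.2 := by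
    rw [((hG.boxProd hH).preconnected x y).coe_dist_eq_edist, edist_boxProd,
      (hG.preconnected x.1 y.1).coe_dist_eq_edist, (hH.preconnected x.2 y.2).coe_dist_eq_edist]
  exact_mod_cast h

lemma gInterval_boxProd (hG : G.Connected) (hH : H.Connected) (x y : V₁ × V₂) :
    gInterval (G □ H) x y = gInterval G x.1 y.1 ×ˢ gInterval H x.2 y.2 := by
  ext z
  have h₁ := hG.dist_triangle (u := x.1) (v := z.1) (w := y.1)
  have h₂ := hH.dist_triangle (u := x.2) (v := z.2) (w := y.2)
  simp only [gInterval, Set.mem_ofPred_eq, Set.mem_prod, hG.dist_boxProd hH]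
  omega

lemma gInterval_boxProd_eq_univ_iff (hG : G.Connected) (hH : H.Connected) (x y : V₁ × V₂) :
    gInterval (G □ H) x y = .univ ↔
      gInterval G x.1 y.1 = .univ ∧ gInterval H x.2 y.2 = .univ := by
  have := hG.nonempty
  have := hH.nonempty
  rw [gInterval_boxProd hG hH, Set.prod_eq_univ]

end BoxProd

/-- The Cartesian product of two graphs is antipodal iff both factors are. -/
theorem stmt_18 {V₁ V₂ : Type*} (G : SimpleGraph V₁) (H : SimpleGraph V₂) :
    IsAntipodal (G.boxProd H) ↔ IsAntipodal G ∧ IsAntipodal H := by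
  constructor
  · rintro ⟨hc, hanti⟩
    have hG := hc.ofBoxProdLeft
    have hH := hc.ofBoxProdRight
    obtain ⟨a₀, b₀⟩ := hc.nonempty.some
    refine ⟨⟨hG, fun a => ?_⟩, ⟨hH, fun b => ?_⟩⟩
    · obtain ⟨y, hy⟩ := hanti (a, b₀)
      exact ⟨y.1, ((gInterval_boxProd_eq_univ_iff hG hH _ _).1 hy).1⟩
    · obtain ⟨y, hy⟩ := hanti (a₀, b)
      exact ⟨y.2, ((gInterval_boxProd_eq_univ_iff hG hH _ _).1 hy).2⟩
  · rintro ⟨⟨hG, hantiG⟩, ⟨hH, hantiH⟩⟩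
    refine ⟨hG.boxProd hH, fun x => ?_⟩
    obtain ⟨y₁, h₁⟩ := hantiG x.1
    obtain ⟨y₂, h₂⟩ := hantiH x.2
    exact ⟨(y₁, y₂), (gInterval_boxProd_eq_univ_iff hG hH _ _).2 ⟨h₁, h₂⟩⟩
end
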